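/- There exists a ℂ-algebra isomorphism from the Laurent polynomial ring ℂ[T,T⁻¹] to ℂ ⊗_ℝ R₁ sending T to i⊗X − 1⊗Y. -/

import Mathlib

noncomputable section

open scoped TensorProduct

/-- The coordinate ring `R₁ = ℝ[X,Y]/(X²+Y²+1)` of the affine open `U₁ = D₊(z)` of the
real anisotropic conic `C = V(x²+y²+z²) ⊂ ℙ²_ℝ`. -/
def R1 : Type :=
  MvPolynomial (Fin 2) ℝ ⧸
    Ideal.span {(MvPolynomial.X 0 : MvPolynomial (Fin 2) ℝ) ^ 2 + MvPolynomial.X 1 ^ 2 + 1}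

instance : CommRing R1 := Ideal.Quotient.commRing _
instance : Algebra ℝ R1 := Ideal.Quotient.algebra ℝ

/-- `X`, the image of the first variable in `R₁` (the rational function `x/z`). -/
def X1 : R1 := Ideal.Quotient.mk _ (MvPolynomial.X 0)

/-- `Y`, the image of the second variable in `R₁` (the rational function `y/z`). -/
def Y1 : R1 := Ideal.Quotient.mk _ (MvPolynomial.X 1)

open LaurentPolynomial


lemma rel1 : X1 ^ 2 + Y1 ^ 2 + 1 = 0 := by
  have h : X1 ^ 2 + Y1 ^ 2 + 1 = Ideal.Quotient.mk _
      ((MvPolynomial.X 0 : MvPolynomial (Fin 2) ℝ) ^ 2 + MvPolynomial.X 1 ^ 2 + 1) := rfl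
  refine h.trans (Ideal.Quotient.eq_zero_iff_mem.2 ?_)
  exact Ideal.subset_span rfl

abbrev A := ℂ ⊗[ℝ] R1

lemma tmm (a b : ℂ) (x y : R1) : (a ⊗ₜ[ℝ] x : A) * (b ⊗ₜ[ℝ] y) = (a*b) ⊗ₜ[ℝ] (x*y) := by
  refine @Algebra.TensorProduct.tmul_mul_tmul ℝ ℂ R1 _ _ _ _ _ _ ?_ ?_ ?_ a b x y

lemma tneg (a : ℂ) (x : R1) : (a ⊗ₜ[ℝ] (-x) : A) = -(a ⊗ₜ[ℝ] x) := by
  refine @TensorProduct.tmul_neg ℝ _ ℂ R1 _ _ _ ?_ a x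

def uE : A := Complex.I ⊗ₜ[ℝ] X1 - 1 ⊗ₜ[ℝ] Y1
def vE : A := Complex.I ⊗ₜ[ℝ] X1 + 1 ⊗ₜ[ℝ] Y1

lemma uv : uE * vE = 1 := by
  have h : uE * vE = (Complex.I * Complex.I) ⊗ₜ[ℝ] (X1 * X1) - (1*1 : ℂ) ⊗ₜ[ℝ] (Y1 * Y1) := by
    rw [uE, vE]
    rw [← tmm, ← tmm]
    ring
  rw [h, Complex.I_mul_I, one_mul, TensorProduct.neg_tmul, neg_sub_left,
    ← TensorProduct.tmul_add, neg_eq_iff_eq_neg]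
  rw [show (-1 : A) = 1 ⊗ₜ[ℝ] (-1) by rw [tneg]; rfl]
  congr 1
  linear_combination rel1

def uu : Aˣ := ⟨uE, vE, uv, by rw [mul_comm]; exact uv⟩

def f : LaurentPolynomial ℂ →ₐ[ℂ] A :=
  (AddMonoidAlgebra.lift ℂ A ℤ) ((Units.coeHom A).comp (zpowersHom Aˣ uu))

lemma f_T (n : ℤ) : f (T n) = ((uu ^ n : Aˣ) : A) := by
  have : (T n : LaurentPolynomial ℂ) = AddMonoidAlgebra.single n 1 := rfl
  rw [f, this, AddMonoidAlgebra.lift_single]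
  simp

lemma f_T1 : f (T 1) = uE := by rw [f_T]; simp [uu]
lemma f_Tm1 : f (T (-1)) = vE := by
  rw [f_T]
  simp only [zpow_neg, zpow_one]
  rfl

-- the backward map pieces
abbrev aC (c : ℂ) : LaurentPolynomial ℂ := algebraMap ℂ _ c

def xL : LaurentPolynomial ℂ := -(aC Complex.I * aC (1/2)) * (T 1 + T (-1))
def yL : LaurentPolynomial ℂ := aC (1/2) * (T (-1) - T 1)

lemma hI' : aC Complex.I ^ 2 = -1 := by
  rw [← map_pow, Complex.I_sq, map_neg, map_one]

lemma h2' : 2 * aC (1/2) = -- (2:LP) * a(1/2) = 1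
    (1 : LaurentPolynomial ℂ) := by
  rw [show (2 : LaurentPolynomial ℂ) = aC 2 from (map_ofNat (algebraMap ℂ (LaurentPolynomial ℂ)) 2).symm, ← map_mul]
  norm_num

lemma h3 : (T 1 : LaurentPolynomial ℂ) * T (-1) = 1 := by
  rw [← T_add]; norm_num

lemma relL : xL ^ 2 + yL ^ 2 + 1 = 0 := by
  rw [xL, yL]
  linear_combination (aC (1/2)^2 * (T 1 + T (-1))^2) * hI' - 4 * aC (1/2)^2 * h3
    - (2 * aC (1/2) + 1) * h2'

def φ0 : MvPolynomial (Fin 2) ℝ →ₐ[ℝ] LaurentPolynomial ℂ :=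
  MvPolynomial.aeval ![xL, yL]

lemma φ0_gen : φ0 ((MvPolynomial.X 0 : MvPolynomial (Fin 2) ℝ) ^ 2 + MvPolynomial.X 1 ^ 2 + 1)
    = 0 := by
  simp only [φ0, map_add, map_pow, map_one, MvPolynomial.aeval_X]
  simpa using relL

def φ : R1 →ₐ[ℝ] LaurentPolynomial ℂ :=
  Ideal.Quotient.liftₐ _ φ0 (by
    intro a ha
    rw [Ideal.mem_span_singleton] at ha
    obtain ⟨c, rfl⟩ := ha
    rw [map_mul, φ0_gen, zero_mul])

lemma φ_X1 : φ X1 = xL := by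
  rw [X1, φ]
  erw [Ideal.Quotient.liftₐ_apply, Ideal.Quotient.lift_mk]
  simp [φ0]

lemma φ_Y1 : φ Y1 = yL := by
  rw [Y1, φ]
  erw [Ideal.Quotient.liftₐ_apply, Ideal.Quotient.lift_mk]
  simp [φ0]

def g : A →ₐ[ℂ] LaurentPolynomial ℂ :=
  Algebra.TensorProduct.lift (Algebra.ofId ℂ _) φ (fun _ _ => Commute.all _ _)

lemma g_tmul (c : ℂ) (r : R1) : g (c ⊗ₜ[ℝ] r) = aC c * φ r :=
  Algebra.TensorProduct.lift_tmul _ _ _ _ _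

-- generic ext for Laurent alg homs into comm rings
lemma laurent_ext {B : Type} [CommRing B] [Algebra ℂ B]
    (F G : LaurentPolynomial ℂ →ₐ[ℂ] B) (h : F (T 1) = G (T 1)) : F = G := by
  have hFi : F (T 1) * F (T (-1)) = 1 := by rw [← map_mul, h3, map_one]
  have hGi : G (T 1) * G (T (-1)) = 1 := by rw [← map_mul, h3, map_one]
  have hm1 : F (T (-1)) = G (T (-1)) := by
    calc F (T (-1)) = F (T (-1)) * (G (T 1) * G (T (-1))) := by rw [hGi, mul_one]
    _ = (F (T 1) * F (T (-1))) * G (T (-1)) := by rw [← h]; ring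
    _ = G (T (-1)) := by rw [hFi, one_mul]
  apply AddMonoidAlgebra.algHom_ext
  intro n
  have hTn : (T n : LaurentPolynomial ℂ) = T 1 ^ n.toNat * T (-1) ^ (-n).toNat := by
    rw [T_pow, T_pow, ← T_add]
    congr 1
    omega
  have : (AddMonoidAlgebra.single n 1 : LaurentPolynomial ℂ) = T n := rfl
  rw [this, hTn, map_mul, map_mul, map_pow, map_pow, map_pow, map_pow, h, hm1]
  exact Subsingleton.elim _ _

lemma f_aC (c : ℂ) : f (aC c) = c ⊗ₜ[ℝ] 1 := by
  rw [show f (aC c) = algebraMap ℂ A c from f.commutes c,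
    Algebra.TensorProduct.algebraMap_apply]
  simp

lemma f_xL : f xL = 1 ⊗ₜ[ℝ] X1 := by
  have hsum : uE + vE = (Complex.I + Complex.I) ⊗ₜ[ℝ] X1 := by
    rw [uE, vE, TensorProduct.add_tmul]; ring
  rw [xL, map_mul, map_neg, map_mul, map_add, f_T1, f_Tm1, f_aC, f_aC, hsum,
    tmm, ← TensorProduct.neg_tmul,
    tmm]
  congr 1
  · linear_combination -Complex.I_mul_I
  · ring

lemma f_yL : f yL = 1 ⊗ₜ[ℝ] Y1 := by
  have hdiff : vE - uE = ((1 : ℂ) + 1) ⊗ₜ[ℝ] Y1 := by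
    rw [uE, vE, TensorProduct.add_tmul]; ring
  rw [yL, map_mul, map_sub, f_T1, f_Tm1, f_aC, hdiff,
    tmm]
  congr 1 <;> norm_num

lemma fφ : (f.restrictScalars ℝ).comp φ =
    (Algebra.TensorProduct.includeRight : R1 →ₐ[ℝ] A) := by
  apply Ideal.Quotient.algHom_ext
  apply MvPolynomial.algHom_ext
  intro i
  fin_cases i
  · show f (φ X1) = (1 : ℂ) ⊗ₜ[ℝ] X1
    rw [φ_X1, f_xL]
  · show f (φ Y1) = (1 : ℂ) ⊗ₜ[ℝ] Y1
    rw [φ_Y1, f_yL]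

lemma hfg : f.comp g = AlgHom.id ℂ A := by
  apply Algebra.TensorProduct.ext'
  intro c r
  have hr : f (φ r) = 1 ⊗ₜ[ℝ] r := DFunLike.congr_fun fφ r
  simp only [AlgHom.comp_apply, g_tmul, map_mul, f_aC, hr, AlgHom.id_apply,
    tmm, mul_one, one_mul]

lemma hgf : g.comp f = AlgHom.id ℂ (LaurentPolynomial ℂ) := by
  apply laurent_ext
  rw [AlgHom.comp_apply, f_T1, AlgHom.id_apply, uE, map_sub, g_tmul, g_tmul, φ_X1, φ_Y1,
    show aC 1 = 1 from map_one _, one_mul, xL, yL]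
  linear_combination (T 1 : LaurentPolynomial ℂ) * h2' - aC (1/2) * (T 1 + T (-1)) * hI'


/-- There exists a `ℂ`-algebra isomorphism from the Laurent polynomial ring
`ℂ[T,T⁻¹]` to `ℂ ⊗_ℝ R₁` sending `T` to `i⊗X − 1⊗Y`. -/
theorem statement_2 :
    ∃ e : LaurentPolynomial ℂ ≃ₐ[ℂ] ℂ ⊗[ℝ] R1,
      e (LaurentPolynomial.T 1) = Complex.I ⊗ₜ[ℝ] X1 - 1 ⊗ₜ[ℝ] Y1 := by
  exact ⟨AlgEquiv.ofAlgHom f g hfg hgf, f_T1⟩
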